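/- Let m, n be integers with min(|m|,|n|) > 1 and let Γ = BS(m,n) = ⟨b,t ∣ t b^m t⁻¹ = b^n⟩. Let μ be a probability measure on Γ whose support is symmetric (stable under inversion) and generates Γ, and let (G_k)_{k≥1} be independent Γ-valued random variables each with distribution μ; set S_k = G_1 ⋯ G_k. Let Λ ≤ Γ be a subgroup and consider the natural right action of Γ on the coset space Λ\Γ. Let A ⊆ Λ\Γ be a union of finitely many orbits of the right ⟨b⟩-action on Λ\Γ, and assume A ≠ Λ\Γ. Then for every x ∈ Λ\Γ and every w ∈ Γ, ℙ( x·(w S_k) ∈ A for every k ≥ 0 ) = 0. -/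

import Mathlib

open MeasureTheory ProbabilityTheory Filter
open scoped ENNReal

/-- The single defining relation of the Baumslag–Solitar group `BS(m,n)`:
`t b^m t⁻¹ b^{-n}` in the free group on `Bool` (with `false ↦ b`, `true ↦ t`). -/
def BSRels (m n : ℤ) : Set (FreeGroup Bool) :=
  {FreeGroup.of true * FreeGroup.of false ^ m * (FreeGroup.of true)⁻¹ * FreeGroup.of false ^ (-n)}

/-- The Baumslag–Solitar group `BS(m,n) = ⟨b, t ∣ t b^m t⁻¹ = b^n⟩`. -/
abbrev BS (m n : ℤ) : Type := PresentedGroup (BSRels m n)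

/-- The generator `b` of `BS(m,n)`. -/
def BS.b (m n : ℤ) : BS m n := PresentedGroup.of false

/-- The generator `t` of `BS(m,n)`. -/
def BS.t (m n : ℤ) : BS m n := PresentedGroup.of true

/-- The four standard letters `b, b⁻¹, t, t⁻¹` of `BS(m,n)`, encoded by a pair of booleans:
the first component tells whether the letter is a stable letter (`t^{±1}`), the second whether
it is inverted. -/
def BS.letter (m n : ℤ) : Bool × Bool → BS m n
  | (false, false) => BS.b m n
  | (false, true)  => (BS.b m n)⁻¹
  | (true, false)  => BS.t m n
  | (true, true)   => (BS.t m n)⁻¹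

/-- The height of an element of `BS(m,n)`: the minimal number of letters `t^{±1}` in a word
over `{b, b⁻¹, t, t⁻¹}` representing it. -/
noncomputable def BS.height (m n : ℤ) (g : BS m n) : ℕ :=
  sInf {r : ℕ | ∃ w : List (Bool × Bool),
    (w.map (BS.letter m n)).prod = g ∧ r = (w.filter (fun x => x.1)).length}

instance (m n : ℤ) : MeasurableSpace (BS m n) := ⊤

instance (m n : ℤ) : MeasurableSingletonClass (BS m n) :=
  ⟨fun _ => MeasurableSpace.measurableSet_top⟩

/-- The space of right cosets `Λ\Γ`. -/
def rQuot {Γ : Type*} [Group Γ] (Λ : Subgroup Γ) : Type _ :=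
  Quotient (QuotientGroup.rightRel Λ)

/-- The natural right action of `Γ` on `Λ\Γ`: `(Λg)·h = Λ(gh)`. -/
def rAct {Γ : Type*} [Group Γ] (Λ : Subgroup Γ) (x : rQuot Λ) (g : Γ) : rQuot Λ :=
  Quotient.map' (fun h => h * g)
    (fun a b hab => by
      have h1 : b * a⁻¹ ∈ Λ := (QuotientGroup.rightRel_apply).mp hab
      have h2 : (b * g) * (a * g)⁻¹ ∈ Λ := by
        simpa [mul_inv_rev, mul_assoc] using h1
      exact (QuotientGroup.rightRel_apply).mpr h2) x


-- ### Auxiliary lemmas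


instance : Countable (FreeGroup Bool) := FreeGroup.toWord_injective.countable

instance (m n : ℤ) : Countable (BS m n) :=
  inferInstanceAs (Countable (Quotient _))

section RQ
variable {Γ : Type*} [Group Γ] (Λ : Subgroup Γ)

lemma rAct_mk (a g : Γ) : rAct Λ (Quotient.mk'' a) g = Quotient.mk'' (a * g) :=
  Quotient.map'_mk'' _ _ _

lemma rAct_mul (x : rQuot Λ) (g h : Γ) : rAct Λ x (g * h) = rAct Λ (rAct Λ x g) h := by
  refine Quotient.inductionOn' x fun a => ?_
  simp [rAct_mk, mul_assoc]
  rfl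

lemma rAct_one (x : rQuot Λ) : rAct Λ x 1 = x := by
  refine Quotient.inductionOn' x fun a => ?_
  simp [rAct_mk]
  rfl

lemma rAct_surj (u v : rQuot Λ) : ∃ γ : Γ, rAct Λ u γ = v := by
  refine Quotient.inductionOn₂' u v fun a c => ?_
  exact ⟨a⁻¹ * c, by simp [rAct_mk]; rfl⟩

instance : Nonempty (rQuot Λ) := ⟨Quotient.mk'' 1⟩

end RQ

section BSalg
variable (m n : ℤ)

lemma BS.trel : BS.t m n * (BS.b m n) ^ m * (BS.t m n)⁻¹ = (BS.b m n) ^ n := by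
  have hr : (FreeGroup.of true * FreeGroup.of false ^ m * (FreeGroup.of true)⁻¹ *
      FreeGroup.of false ^ (-n)) ∈ BSRels m n := rfl
  have h1 : PresentedGroup.mk (BSRels m n)
      (FreeGroup.of true * FreeGroup.of false ^ m * (FreeGroup.of true)⁻¹ *
        FreeGroup.of false ^ (-n)) = 1 := by
    apply (QuotientGroup.eq_one_iff _).mpr
    exact Subgroup.subset_normalClosure hr
  have h2 : BS.t m n * (BS.b m n) ^ m * (BS.t m n)⁻¹ * (BS.b m n) ^ (-n) = 1 := by
    simpa [map_mul, map_zpow, map_inv, BS.t, BS.b, PresentedGroup.of] using h1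
  have := mul_eq_one_iff_eq_inv.mp h2
  rw [this]
  simp [zpow_neg]

lemma conj_zpow'' {G : Type*} [Group G] (x y : G) (k : ℤ) :
    (x * y * x⁻¹) ^ k = x * y ^ k * x⁻¹ := by
  have := map_zpow (MulAut.conj x) y k
  simpa [MulAut.conj_apply] using this.symm

lemma BS.conj_pow (k : ℤ) :
    BS.t m n * (BS.b m n) ^ (m * k) * (BS.t m n)⁻¹ = (BS.b m n) ^ (n * k) := by
  rw [zpow_mul, zpow_mul, ← BS.trel m n, conj_zpow'']

lemma BS.bn_t (k : ℤ) :
    (BS.b m n) ^ (n * k) * BS.t m n = BS.t m n * (BS.b m n) ^ (m * k) := by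
  rw [← BS.conj_pow m n k]
  group

lemma BS.bm_tinv (k : ℤ) :
    (BS.b m n) ^ (m * k) * (BS.t m n)⁻¹ = (BS.t m n)⁻¹ * (BS.b m n) ^ (n * k) := by
  rw [← BS.conj_pow m n k]
  group

lemma BS.exists_letter_list (γ : BS m n) :
    ∃ l : List (BS m n),
      (∀ g ∈ l, g = BS.b m n ∨ g = (BS.b m n)⁻¹ ∨ g = BS.t m n ∨ g = (BS.t m n)⁻¹)
      ∧ l.prod = γ := by
  have h1 : γ ∈ Subgroup.closure (Set.range (PresentedGroup.of : Bool → BS m n)) := by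
    rw [PresentedGroup.closure_range_of]; trivial
  have h2 : γ ∈ Submonoid.closure ((Set.range (PresentedGroup.of : Bool → BS m n)) ∪
      (Set.range (PresentedGroup.of : Bool → BS m n))⁻¹) := by
    rw [← Subgroup.closure_toSubmonoid]
    exact h1
  obtain ⟨l, hl, hlp⟩ := Submonoid.exists_list_of_mem_closure h2
  refine ⟨l, fun g hg => ?_, hlp⟩
  rcases hl g hg with h | h
  · obtain ⟨x, rfl⟩ := h
    cases x
    · exact Or.inl rfl
    · exact Or.inr (Or.inr (Or.inl rfl))
  · rw [Set.mem_inv] at h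
    obtain ⟨x, hx⟩ := Set.mem_range.mp h
    have : g = (PresentedGroup.of x)⁻¹ := by rw [hx, inv_inv]
    cases x
    · exact Or.inr (Or.inl this)
    · exact Or.inr (Or.inr (Or.inr this))

lemma exists_supp_list (μ : Measure (BS m n))
    (hsymm : ∀ g : BS m n, μ {g} ≠ 0 → μ {g⁻¹} ≠ 0)
    (hgen : Subgroup.closure {g : BS m n | μ {g} ≠ 0} = ⊤) (γ : BS m n) :
    ∃ l : List (BS m n), (∀ g ∈ l, μ {g} ≠ 0) ∧ l.prod = γ := by
  have h1 : γ ∈ Subgroup.closure {g : BS m n | μ {g} ≠ 0} := by rw [hgen]; trivial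
  have h2 : γ ∈ Submonoid.closure ({g : BS m n | μ {g} ≠ 0} ∪
      {g : BS m n | μ {g} ≠ 0}⁻¹) := by
    rw [← Subgroup.closure_toSubmonoid]
    exact h1
  obtain ⟨l, hl, hlp⟩ := Submonoid.exists_list_of_mem_closure h2
  refine ⟨l, fun g hg => ?_, hlp⟩
  rcases hl g hg with h | h
  · exact h
  · rw [Set.mem_inv] at h
    have := hsymm _ h
    simpa using this

section Walk

variable {Γ : Type*} [Group Γ] {Ω : Type*} [MeasurableSpace Ω]
variable (Λ : Subgroup Γ) (A : Set (rQuot Λ)) (G : ℕ → Ω → Γ)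

/-- product of the `j` step variables starting at index `a` -/
def wprod (a j : ℕ) (ω : Ω) : Γ := ((List.range j).map (fun i => G (a + i) ω)).prod

def WSet (a : ℕ) (q : rQuot Λ) : Set Ω := {ω | ∀ j : ℕ, rAct Λ q (wprod G a j ω) ∈ A}

def WSetF (a J : ℕ) (q : rQuot Λ) : Set Ω := {ω | ∀ j ≤ J, rAct Λ q (wprod G a j ω) ∈ A}

def WCell (a : ℕ) (l : List Γ) : Set Ω := {ω | ∀ i < l.length, G (a + i) ω = l.getD i 1}

/-- admissible trajectories -/
def OKL (J : ℕ) (q : rQuot Λ) : Set (List Γ) :=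
  {l | l.length = J ∧ ∀ j ≤ J, rAct Λ q (((List.range j).map (fun i => l.getD i 1)).prod) ∈ A}

lemma wprod_zero (a : ℕ) (ω : Ω) : wprod G a 0 ω = 1 := by simp [wprod]

lemma wprod_succ (a j : ℕ) (ω : Ω) :
    wprod G a (j + 1) ω = G a ω * wprod G (a + 1) j ω := by
  unfold wprod
  rw [List.range_succ_eq_map, List.map_cons, List.prod_cons, List.map_map]
  have h : ((fun i => G (a + i) ω) ∘ Nat.succ) = fun i => G (a + 1 + i) ω := by
    funext i; simp only [Function.comp_apply]; congr 1; omega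
  rw [h]
  simp

variable [MeasurableSpace Γ] [Countable Γ] [MeasurableSingletonClass Γ]

lemma measurableSet_all (s : Set Γ) : MeasurableSet s := (Set.to_countable s).measurableSet

lemma measurable_wprod (hG : ∀ i, Measurable (G i)) (a j : ℕ) :
    Measurable (wprod G a j) := by
  haveI : MeasurableMul₂ Γ := ⟨measurable_of_countable _⟩
  induction j generalizing a with
  | zero =>
    have : wprod G a 0 = fun _ => (1 : Γ) := funext fun ω => wprod_zero G a ω
    rw [this]; exact measurable_const
  | succ j ih =>
    have : wprod G a (j + 1) = fun ω => G a ω * wprod G (a + 1) j ω :=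
      funext fun ω => wprod_succ G a j ω
    rw [this]; exact (hG a).mul (ih (a + 1))

lemma measurableSet_WSetF (hG : ∀ i, Measurable (G i)) (a J : ℕ) (q : rQuot Λ) :
    MeasurableSet (WSetF Λ A G a J q) := by
  have : WSetF Λ A G a J q
      = ⋂ (j : ℕ) (_ : j ≤ J), (wprod G a j) ⁻¹' {γ | rAct Λ q γ ∈ A} := by
    ext ω; simp [WSetF]
  rw [this]
  exact MeasurableSet.iInter fun j => MeasurableSet.iInter fun _ =>
    (measurable_wprod G hG a j) (measurableSet_all _)

lemma measurableSet_WSet (hG : ∀ i, Measurable (G i)) (a : ℕ) (q : rQuot Λ) :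
    MeasurableSet (WSet Λ A G a q) := by
  have : WSet Λ A G a q = ⋂ (j : ℕ), (wprod G a j) ⁻¹' {γ | rAct Λ q γ ∈ A} := by
    ext ω; simp [WSet]
  rw [this]
  exact MeasurableSet.iInter fun j => (measurable_wprod G hG a j) (measurableSet_all _)

lemma measurableSet_WCell (hG : ∀ i, Measurable (G i)) (a : ℕ) (l : List Γ) :
    MeasurableSet (WCell G a l) := by
  have : WCell G a l = ⋂ (i : ℕ) (_ : i < l.length), (G (a + i)) ⁻¹' {l.getD i 1} := by
    ext ω; simp [WCell]
  rw [this]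
  exact MeasurableSet.iInter fun i => MeasurableSet.iInter fun _ =>
    (hG (a + i)) (measurableSet_all _)

lemma WSet_eq_iInter (a : ℕ) (q : rQuot Λ) :
    WSet Λ A G a q = ⋂ J, WSetF Λ A G a J q := by
  ext ω
  simp only [WSet, WSetF, Set.mem_setOf_eq, Set.mem_iInter]
  exact ⟨fun h J j _ => h j, fun h j => h j j le_rfl⟩

lemma WSetF_mono {J J' : ℕ} (h : J ≤ J') (a : ℕ) (q : rQuot Λ) :
    WSetF Λ A G a J' q ⊆ WSetF Λ A G a J q :=
  fun ω hω j hj => hω j (hj.trans h)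

lemma WCell_disjoint (a : ℕ) {l l' : List Γ} (hL : l.length = l'.length) (hne : l ≠ l') :
    Disjoint (WCell (Ω := Ω) G a l) (WCell G a l') := by
  rw [Set.disjoint_left]
  intro ω h1 h2
  apply hne
  apply List.ext_getElem hL
  intro i hi hi'
  have e1 := h1 i hi
  have e2 := h2 i hi'
  rw [List.getD_eq_getElem l 1 hi] at e1
  rw [List.getD_eq_getElem l' 1 hi'] at e2
  rw [← e1, ← e2]

variable (P : Measure Ω) [IsProbabilityMeasure P] (μ : Measure Γ) [IsProbabilityMeasure μ]

lemma list_prod_map_getD (f : Γ → ℝ≥0∞) :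
    ∀ l : List Γ, ∏ i ∈ Finset.range l.length, f (l.getD i 1) = (l.map f).prod
  | [] => by simp
  | x :: xs => by
    rw [List.length_cons, Finset.prod_range_succ', List.map_cons, List.prod_cons]
    simp only [List.getD_cons_succ, List.getD_cons_zero]
    rw [list_prod_map_getD f xs, mul_comm]

lemma measure_WCell (hG : ∀ i, Measurable (G i))
    (hindep : iIndepFun G P)
    (hdist : ∀ i, Measure.map (G i) P = μ) (a : ℕ) (l : List Γ) :
    P (WCell G a l) = (l.map (fun x => μ {x})).prod := by
  classical
  have hset : WCell (Ω := Ω) G a l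
      = ⋂ i ∈ (Finset.range l.length).image (a + ·), G i ⁻¹' {l.getD (i - a) 1} := by
    ext ω
    simp only [WCell, Set.mem_setOf_eq, Set.mem_iInter, Finset.mem_image, Finset.mem_range,
      Set.mem_preimage, Set.mem_singleton_iff]
    constructor
    · rintro h i ⟨i', hi', rfl⟩
      rw [Nat.add_sub_cancel_left]
      exact h i' hi'
    · intro h i hi
      have := h (a + i) ⟨i, hi, rfl⟩
      rwa [Nat.add_sub_cancel_left] at this
  rw [hset]
  rw [hindep.measure_inter_preimage_eq_mul _ (fun i _ => measurableSet_all _)]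
  rw [Finset.prod_image (fun x _ y _ h => by omega)]
  have hterm : ∀ i' ∈ Finset.range l.length,
      P (G (a + i') ⁻¹' {l.getD (a + i' - a) 1}) = (fun x => μ {x}) (l.getD i' 1) := by
    intro i' _
    simp only [Nat.add_sub_cancel_left]
    rw [← hdist (a + i'), Measure.map_apply (hG _) (measurableSet_all _)]
  rw [Finset.prod_congr rfl hterm]
  exact list_prod_map_getD (fun x => μ {x}) l

lemma WSetF_eq_iUnion (a J : ℕ) (q : rQuot Λ) :
    WSetF Λ A G a J q = ⋃ l : OKL Λ A J q, WCell G a (l : List Γ) := by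
  ext ω
  simp only [Set.mem_iUnion]
  constructor
  · intro h
    refine ⟨⟨(List.range J).map (fun i => G (a + i) ω), ⟨by simp, ?_⟩⟩, ?_⟩
    · intro j hj
      have he : (((List.range j).map
          (fun i => ((List.range J).map (fun i => G (a + i) ω)).getD i 1)).prod)
          = wprod G a j ω := by
        unfold wprod
        congr 1
        apply List.map_congr_left
        intro i hi
        have hiJ : i < J := lt_of_lt_of_le (List.mem_range.mp hi) hj
        rw [List.getD_eq_getElem _ 1 (by simpa using hiJ)]
        simp
      rw [he]
      exact h j hj
    · intro i hi
      simp only [List.length_map, List.length_range] at hi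
      rw [List.getD_eq_getElem _ 1 (by simpa using hi)]
      simp
  · rintro ⟨⟨l, hlen, hok⟩, hcell⟩
    intro j hj
    have he : wprod G a j ω = ((List.range j).map (fun i => l.getD i 1)).prod := by
      unfold wprod
      congr 1
      apply List.map_congr_left
      intro i hi
      exact hcell i (by rw [hlen]; exact lt_of_lt_of_le (List.mem_range.mp hi) hj)
    rw [he]
    exact hok j hj

lemma measure_WSetF (hG : ∀ i, Measurable (G i)) (a J : ℕ) (q : rQuot Λ) :
    P (WSetF Λ A G a J q) = ∑' l : OKL Λ A J q, P (WCell G a (l : List Γ)) := by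
  rw [WSetF_eq_iUnion]
  apply measure_iUnion
  · rintro ⟨l, hl⟩ ⟨l', hl'⟩ hne
    exact WCell_disjoint G a (hl.1.trans hl'.1.symm) (by simpa using Subtype.coe_ne_coe.mpr hne)
  · intro l
    exact measurableSet_WCell G hG a _

lemma measure_WSetF_offset (hG : ∀ i, Measurable (G i))
    (hindep : iIndepFun G P)
    (hdist : ∀ i, Measure.map (G i) P = μ) (a a' J : ℕ) (q : rQuot Λ) :
    P (WSetF Λ A G a J q) = P (WSetF Λ A G a' J q) := by
  rw [measure_WSetF Λ A G P hG, measure_WSetF Λ A G P hG]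
  apply tsum_congr
  intro l
  rw [measure_WCell G P μ hG hindep hdist, measure_WCell G P μ hG hindep hdist]

lemma measure_cond (hG : ∀ i, Measurable (G i))
    (hindep : iIndepFun G P)
    (hdist : ∀ i, Measure.map (G i) P = μ) (g : Γ) (J : ℕ) (q : rQuot Λ) :
    P (G 0 ⁻¹' {g} ∩ WSetF Λ A G 1 J q) = μ {g} * P (WSetF Λ A G 1 J q) := by
  have hcell : ∀ l : List Γ, G 0 ⁻¹' {g} ∩ WCell G 1 l = WCell G 0 (g :: l) := by
    intro l
    ext ω
    simp only [WCell, Set.mem_inter_iff, Set.mem_preimage, Set.mem_singleton_iff,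
      Set.mem_setOf_eq, List.length_cons]
    constructor
    · rintro ⟨h0, h⟩ i hi
      cases i with
      | zero => simpa using h0
      | succ i' =>
        have hh := h i' (by omega)
        rw [show (1 + i') = 0 + (i' + 1) from by omega] at hh
        simpa using hh
    · intro h
      constructor
      · have := h 0 (by omega)
        simpa using this
      · intro i hi
        have hh := h (i + 1) (by omega)
        rw [show (0 + (i + 1)) = 1 + i from by omega] at hh
        simpa using hh
  have hterm : ∀ l : OKL Λ A J q,
      P (G 0 ⁻¹' {g} ∩ WCell G 1 (l : List Γ)) = μ {g} * P (WCell G 1 (l : List Γ)) := by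
    intro l
    rw [hcell, measure_WCell G P μ hG hindep hdist, measure_WCell G P μ hG hindep hdist,
      List.map_cons, List.prod_cons]
  calc P (G 0 ⁻¹' {g} ∩ WSetF Λ A G 1 J q)
      = P (⋃ l : OKL Λ A J q, (G 0 ⁻¹' {g} ∩ WCell G 1 (l : List Γ))) := by
        rw [WSetF_eq_iUnion, Set.inter_iUnion]
    _ = ∑' l : OKL Λ A J q, P (G 0 ⁻¹' {g} ∩ WCell G 1 (l : List Γ)) := by
        apply measure_iUnion
        · rintro ⟨l, hl⟩ ⟨l', hl'⟩ hne
          exact Disjoint.mono Set.inter_subset_right Set.inter_subset_right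
            (WCell_disjoint G 1 (hl.1.trans hl'.1.symm)
              (by simpa using Subtype.coe_ne_coe.mpr hne))
        · intro l
          exact (hG 0 (measurableSet_all _)).inter (measurableSet_WCell G hG 1 _)
    _ = ∑' l : OKL Λ A J q, μ {g} * P (WCell G 1 (l : List Γ)) := tsum_congr hterm
    _ = μ {g} * ∑' l : OKL Λ A J q, P (WCell G 1 (l : List Γ)) := ENNReal.tsum_mul_left
    _ = μ {g} * P (WSetF Λ A G 1 J q) := by rw [measure_WSetF Λ A G P hG]

lemma measure_WSet_eq_iInf (hG : ∀ i, Measurable (G i)) (a : ℕ) (q : rQuot Λ) :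
    P (WSet Λ A G a q) = ⨅ J, P (WSetF Λ A G a J q) := by
  rw [WSet_eq_iInter]
  apply Directed.measure_iInter
  · intro J
    exact (measurableSet_WSetF Λ A G hG a J q).nullMeasurableSet
  · intro J J'
    exact ⟨max J J', WSetF_mono Λ A G (le_max_left _ _) a q,
      WSetF_mono Λ A G (le_max_right _ _) a q⟩
  · exact ⟨0, measure_ne_top _ _⟩

lemma measure_cond_total (hG : ∀ i, Measurable (G i))
    (hindep : iIndepFun G P)
    (hdist : ∀ i, Measure.map (G i) P = μ) {q : rQuot Λ} (hq : q ∈ A) (g : Γ) :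
    P (WSet Λ A G 0 q ∩ G 0 ⁻¹' {g}) = μ {g} * P (WSet Λ A G 0 (rAct Λ q g)) := by
  rcases eq_or_ne (μ {g}) 0 with h0 | h0
  · rw [h0, zero_mul]
    have hg0 : P (G 0 ⁻¹' {g}) = 0 := by
      rw [← Measure.map_apply (hG 0) (measurableSet_all _), hdist]
      exact h0
    exact le_antisymm (le_trans (measure_mono Set.inter_subset_right) hg0.le) zero_le
  have hset : WSet Λ A G 0 q ∩ G 0 ⁻¹' {g}
      = ⋂ J, (G 0 ⁻¹' {g} ∩ WSetF Λ A G 1 J (rAct Λ q g)) := by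
    ext ω
    simp only [Set.mem_inter_iff, Set.mem_iInter, Set.mem_preimage, Set.mem_singleton_iff,
      WSet, WSetF, Set.mem_setOf_eq]
    constructor
    · rintro ⟨h, hg⟩ J
      refine ⟨hg, fun j hj => ?_⟩
      have hk := h (j + 1)
      rw [wprod_succ, hg, rAct_mul] at hk
      exact hk
    · intro h
      have hg : G 0 ω = g := (h 0).1
      refine ⟨fun k => ?_, hg⟩
      cases k with
      | zero =>
        have : wprod G 0 0 ω = 1 := wprod_zero G 0 ω
        rw [this, rAct_one]
        exact hq
      | succ j =>
        have hk := (h j).2 j le_rfl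
        rw [wprod_succ, hg, rAct_mul]
        exact hk
  rw [hset]
  rw [Directed.measure_iInter ?m2 ?d2 ?f2]
  case m2 =>
    intro J
    exact ((hG 0 (measurableSet_all _)).inter
      (measurableSet_WSetF Λ A G hG 1 J _)).nullMeasurableSet
  case d2 =>
    intro J J'
    exact ⟨max J J',
      Set.inter_subset_inter_right _ (WSetF_mono Λ A G (le_max_left _ _) 1 _),
      Set.inter_subset_inter_right _ (WSetF_mono Λ A G (le_max_right _ _) 1 _)⟩
  case f2 => exact ⟨0, measure_ne_top _ _⟩
  have hJ : ∀ J, P (G 0 ⁻¹' {g} ∩ WSetF Λ A G 1 J (rAct Λ q g))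
      = μ {g} * P (WSetF Λ A G 0 J (rAct Λ q g)) := by
    intro J
    rw [measure_cond Λ A G P μ hG hindep hdist,
      measure_WSetF_offset Λ A G P μ hG hindep hdist 1 0]
  simp_rw [hJ]
  rw [← ENNReal.mul_iInf_of_ne h0 (measure_ne_top μ _), ← measure_WSet_eq_iInf Λ A G P hG]

lemma measure_WSet_decomp (hG : ∀ i, Measurable (G i)) (q : rQuot Λ) :
    P (WSet Λ A G 0 q) = ∑' g : Γ, P (WSet Λ A G 0 q ∩ G 0 ⁻¹' {g}) := by
  have hU : WSet Λ A G 0 q = ⋃ g : Γ, (WSet Λ A G 0 q ∩ G 0 ⁻¹' {g}) := by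
    ext ω
    simp only [Set.mem_iUnion, Set.mem_inter_iff, Set.mem_preimage, Set.mem_singleton_iff]
    exact ⟨fun h => ⟨G 0 ω, h, rfl⟩, fun ⟨g, h, _⟩ => h⟩
  rw [congrArg P hU]
  apply measure_iUnion
  · intro g g' hne
    try simp only [Function.onFun]
    rw [Set.disjoint_left]
    rintro ω ⟨_, h1⟩ ⟨_, h2⟩
    simp only [Set.mem_preimage, Set.mem_singleton_iff] at h1 h2
    exact hne (by rw [← h1, h2])
  · intro g
    exact (measurableSet_WSet Λ A G hG 0 q).inter (hG 0 (measurableSet_all _))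

lemma measure_harmonic (hG : ∀ i, Measurable (G i))
    (hindep : iIndepFun G P)
    (hdist : ∀ i, Measure.map (G i) P = μ) {q : rQuot Λ} (hq : q ∈ A) :
    P (WSet Λ A G 0 q) = ∑' g : Γ, μ {g} * P (WSet Λ A G 0 (rAct Λ q g)) := by
  rw [measure_WSet_decomp Λ A G P hG]
  exact tsum_congr fun g => measure_cond_total Λ A G P μ hG hindep hdist hq g

lemma tsum_mu_singleton : ∑' g : Γ, μ {g} = 1 := by
  have : (Set.univ : Set Γ) = ⋃ g : Γ, {g} := (Set.iUnion_of_singleton Γ).symm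
  rw [← measure_univ (μ := μ), this, measure_iUnion]
  · intro g g' hne
    try simp only [Function.onFun]
    rw [Set.disjoint_left]
    rintro x hx hx'
    simp only [Set.mem_singleton_iff] at hx hx'
    exact hne (by rw [← hx, hx'])
  · intro g
    exact measurableSet_all _

lemma WSet_empty_of_notmem {q : rQuot Λ} (hq : q ∉ A) : WSet Λ A G 0 q = ∅ := by
  ext ω
  simp only [WSet, Set.mem_setOf_eq, Set.mem_empty_iff_false, iff_false, not_forall]
  refine ⟨0, ?_⟩
  rw [wprod_zero, rAct_one]
  exact hq

end Walk


theorem walk_exits_finite_union_of_b_orbits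
    (m n : ℤ) (h1m : 1 < m.natAbs) (h1n : 1 < n.natAbs)
    (μ : Measure (BS m n)) [IsProbabilityMeasure μ]
    (hsymm : ∀ g : BS m n, μ {g} ≠ 0 → μ {g⁻¹} ≠ 0)
    (hgen : Subgroup.closure {g : BS m n | μ {g} ≠ 0} = ⊤)
    {Ω : Type*} [MeasurableSpace Ω] (P : Measure Ω) [IsProbabilityMeasure P]
    (G : ℕ → Ω → BS m n) (hmeas : ∀ i, Measurable (G i))
    (hindep : iIndepFun G P)
    (hdist : ∀ i, Measure.map (G i) P = μ)
    (S : ℕ → Ω → BS m n)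
    (hS : ∀ k ω, S k ω = ((List.range k).map (fun i => G i ω)).prod)
    (Λ : Subgroup (BS m n)) (A : Set (rQuot Λ))
    (F : Finset (rQuot Λ))
    (hA : A = ⋃ y ∈ F, {x | ∃ j : ℤ, x = rAct Λ y (BS.b m n ^ j)})
    (hAne : A ≠ Set.univ) :
    ∀ (x : rQuot Λ) (w : BS m n),
      P {ω | ∀ k, rAct Λ x (w * S k ω) ∈ A} = 0 := by
  classical
  intro x w
  by_contra hcon
  set bb := BS.b m n with hbb_def
  set tt := BS.t m n with htt_def
  -- the stay-forever probability
  set pf : rQuot Λ → ℝ≥0∞ := fun p => P (WSet Λ A G 0 p) with hpf_def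
  have hpft : ∀ p, pf p ≠ ∞ := fun p => measure_ne_top P _
  set f : rQuot Λ → ℝ := fun p => (pf p).toReal with hf_def
  have hf0 : ∀ p, 0 ≤ f p := fun p => ENNReal.toReal_nonneg
  have hf1 : ∀ p, f p ≤ 1 := by
    intro p
    have h1 : pf p ≤ 1 := prob_le_one
    have := ENNReal.toReal_mono ENNReal.one_ne_top h1
    simpa using this
  have hbdd : BddAbove (Set.range f) := ⟨1, by rintro r ⟨p, rfl⟩; exact hf1 p⟩
  set s : ℝ := ⨆ p, f p with hs_def
  have hfs : ∀ p, f p ≤ s := fun p => le_ciSup hbdd p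
  have hsnn : 0 ≤ s := le_trans (hf0 _) (hfs (Quotient.mk'' 1))
  -- identify target event
  have hw0 : ∀ k ω, wprod G 0 k ω = S k ω := by
    intro k ω
    rw [hS]
    unfold wprod
    congr 1
    apply List.map_congr_left
    intro i _
    rw [Nat.zero_add]
  have hsetid : {ω | ∀ k, rAct Λ x (w * S k ω) ∈ A} = WSet Λ A G 0 (rAct Λ x w) := by
    ext ω
    simp only [Set.mem_setOf_eq, WSet]
    constructor
    · intro h j
      rw [hw0, ← rAct_mul]
      exact h j
    · intro h k
      have := h k
      rw [hw0, ← rAct_mul] at this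
      exact this
  have hfpos : 0 < f (rAct Λ x w) := by
    apply ENNReal.toReal_pos _ (hpft _)
    rw [hpf_def]
    simp only
    rw [← hsetid]
    exact hcon
  have hs : 0 < s := lt_of_lt_of_le hfpos (hfs _)
  -- f vanishes off A
  have hzero : ∀ p, p ∉ A → f p = 0 := by
    intro p hp
    have : pf p = 0 := by
      rw [hpf_def]
      simp only
      rw [WSet_empty_of_notmem Λ A G hp]
      exact measure_empty
    rw [hf_def]; simp only; rw [this]; simp
  have hmemA : ∀ p, 0 < f p → p ∈ A := by
    intro p hp
    by_contra h
    rw [hzero p h] at hp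
    exact lt_irrefl _ hp
  -- the weight function
  set wfun : BS m n → ℝ := fun g => (μ {g}).toReal with hwfun_def
  have hwnn : ∀ g, 0 ≤ wfun g := fun g => ENNReal.toReal_nonneg
  have hwle1 : ∀ g, wfun g ≤ 1 := by
    intro g
    have := ENNReal.toReal_mono ENNReal.one_ne_top (prob_le_one (μ := μ) (s := {g}))
    simpa using this
  -- harmonicity inequality
  have hmono_pf : ∀ p, pf p ≤ ENNReal.ofReal s := by
    intro p
    rw [← ENNReal.ofReal_toReal (hpft p)]
    exact ENNReal.ofReal_le_ofReal (hfs p)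
  have hkey : ∀ p, p ∈ A → ∀ g, f p ≤ wfun g * f (rAct Λ p g) + (1 - wfun g) * s := by
    intro p hpA g
    have hharm := measure_harmonic Λ A G P μ hmeas hindep hdist hpA
    rw [ENNReal.tsum_eq_add_tsum_ite g] at hharm
    have hrest : (∑' g', if g' = g then 0 else μ {g'} * P (WSet Λ A G 0 (rAct Λ p g')))
        ≤ (1 - μ {g}) * ENNReal.ofReal s := by
      refine le_trans (Summable.tsum_le_tsum (f := fun g' => if g' = g then 0 else
          μ {g'} * P (WSet Λ A G 0 (rAct Λ p g')))
        (g := fun g' => (if g' = g then 0 else μ {g'}) * ENNReal.ofReal s)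
        (fun g' => ?_) ENNReal.summable ENNReal.summable) ?_
      · by_cases hgg : g' = g
        · simp [hgg]
        · simp only [hgg, if_false]
          exact mul_le_mul_right (hmono_pf _) _
      · rw [ENNReal.tsum_mul_right]
        have h2 := ENNReal.tsum_eq_add_tsum_ite (f := fun g' => μ {g'}) g
        rw [tsum_mu_singleton μ] at h2
        have h3 : (∑' g', if g' = g then 0 else μ {g'}) = 1 - μ {g} := by
          rw [h2, ENNReal.add_sub_cancel_left (measure_ne_top μ _)]
        rw [h3]
    have hup : pf p ≤ μ {g} * pf (rAct Λ p g) + (1 - μ {g}) * ENNReal.ofReal s := by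
      rw [hpf_def]
      simp only
      rw [hharm]
      exact add_le_add_right hrest _
    have hfin1 : μ {g} * pf (rAct Λ p g) ≠ ∞ :=
      ENNReal.mul_ne_top (measure_ne_top μ _) (hpft _)
    have hfin2 : (1 - μ {g}) * ENNReal.ofReal s ≠ ∞ :=
      ENNReal.mul_ne_top (ENNReal.sub_ne_top ENNReal.one_ne_top) ENNReal.ofReal_ne_top
    have hto := ENNReal.toReal_mono (ENNReal.add_ne_top.mpr ⟨hfin1, hfin2⟩) hup
    rw [ENNReal.toReal_add hfin1 hfin2, ENNReal.toReal_mul, ENNReal.toReal_mul,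
      ENNReal.toReal_ofReal hsnn,
      ENNReal.toReal_sub_of_le prob_le_one ENNReal.one_ne_top, ENNReal.toReal_one] at hto
    exact hto
  -- products of weights
  have hcprod : ∀ l : List (BS m n), (∀ g ∈ l, μ {g} ≠ 0) →
      0 < (l.map wfun).prod ∧ (l.map wfun).prod ≤ 1 := by
    intro l
    induction l with
    | nil => intro _; simp
    | cons g l ih =>
      intro hl
      obtain ⟨h1, h2⟩ := ih (fun g' h => hl g' (List.mem_cons_of_mem _ h))
      have hg : 0 < wfun g :=
        ENNReal.toReal_pos (hl g (List.mem_cons_self)) (measure_ne_top μ _)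
      rw [List.map_cons, List.prod_cons]
      exact ⟨mul_pos hg h1, mul_le_one₀ (hwle1 g) h1.le h2⟩
  -- the chase lemma
  have chase : ∀ l : List (BS m n), (∀ g ∈ l, μ {g} ≠ 0) → ∀ q : rQuot Λ,
      s - f q ≤ (s / 2) * (l.map wfun).prod → s - f (rAct Λ q l.prod) ≤ s / 2 := by
    intro l
    induction l with
    | nil =>
      intro _ q hq
      rw [List.prod_nil, rAct_one]
      simpa using hq
    | cons g l ih =>
      intro hl q hq
      rw [List.map_cons, List.prod_cons] at hq
      have hg : μ {g} ≠ 0 := hl g (List.mem_cons_self)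
      have hwg : 0 < wfun g := ENNReal.toReal_pos hg (measure_ne_top μ _)
      obtain ⟨hc1, hc2⟩ := hcprod l (fun g' h => hl g' (List.mem_cons_of_mem _ h))
      have hwc : wfun g * (List.map wfun l).prod ≤ 1 := mul_le_one₀ (hwle1 g) hc1.le hc2
      have hhalf : (s / 2) * (wfun g * (List.map wfun l).prod) ≤ s / 2 * 1 :=
        mul_le_mul_of_nonneg_left hwc (by linarith)
      have hfq : 0 < f q := by linarith
      have hk := hkey q (hmemA q hfq) g
      have hstep : s - f (rAct Λ q g) ≤ (s / 2) * (l.map wfun).prod := by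
        have hmul : wfun g * (s - f (rAct Λ q g)) ≤ wfun g * ((s / 2) * (l.map wfun).prod) := by
          nlinarith [hk, hq]
        exact le_of_mul_le_mul_left hmul hwg
      have := ih (fun g' h => hl g' (List.mem_cons_of_mem _ h)) (rAct Λ q g) hstep
      rw [List.prod_cons, rAct_mul]
      exact this
  -- find points deep inside A
  have hsupp := fun γ => exists_supp_list m n μ hsymm hgen γ
  choose LL hLL1 hLL2 using hsupp
  set cc : BS m n → ℝ := fun γ => ((LL γ).map wfun).prod with hcc_def
  have hpoint : ∀ T : Finset (BS m n), ∃ q, q ∈ A ∧ ∀ γ ∈ T, 0 < f (rAct Λ q γ) := by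
    intro T
    set T' := insert (1 : BS m n) T with hT'_def
    have hT'ne : T'.Nonempty := ⟨1, Finset.mem_insert_self _ _⟩
    set δ := T'.inf' hT'ne cc with hδ_def
    have hδpos : 0 < δ := by
      rw [hδ_def, Finset.lt_inf'_iff]
      exact fun γ _ => (hcprod _ (hLL1 γ)).1
    have hlow : s - (s / 2) * δ < s := by nlinarith
    obtain ⟨r, hr⟩ := exists_lt_of_lt_ciSup (hlow.trans_le le_rfl)
    have hmain : ∀ γ ∈ T', 0 < f (rAct Λ r γ) := by
      intro γ hγ
      have hδc : δ ≤ cc γ := Finset.inf'_le cc hγ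
      have h1 : s - f r ≤ (s / 2) * cc γ := by nlinarith
      have h2 := chase (LL γ) (hLL1 γ) r h1
      rw [hLL2 γ] at h2
      nlinarith
    refine ⟨r, hmemA r ?_, fun γ hγ => hmain γ (Finset.mem_insert_of_mem hγ)⟩
    have := hmain 1 (Finset.mem_insert_self _ _)
    rwa [rAct_one] at this
  choose q hqA hqT using hpoint
  have hqF : ∀ T, ∃ y, y ∈ F ∧ ∃ j : ℤ, q T = rAct Λ y (bb ^ j) := by
    intro T
    have := hqA T
    rw [hA] at this
    simp only [Set.mem_iUnion, Set.mem_setOf_eq] at this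
    obtain ⟨y, hy, j, hj⟩ := this
    exact ⟨y, hy, j, hj⟩
  choose yy hyF jj hyj using hqF
  -- pigeonhole: a single base orbit
  have hpig : ∃ y0, ∀ T : Finset (BS m n), ∃ T', T ⊆ T' ∧ yy T' = y0 := by
    by_contra hnp
    push_neg at hnp
    choose TT hTT using hnp
    set Tstar := F.sup TT with hTstar
    exact hTT (yy Tstar) Tstar (Finset.le_sup (hyF Tstar)) rfl
  obtain ⟨y0, hy0⟩ := hpig
  -- Good orbits
  set Good : rQuot Λ → Prop := fun u => ∀ T : Finset (BS m n),
    ∃ p, (∃ k : ℤ, p = rAct Λ u (bb ^ k)) ∧ ∀ γ ∈ T, 0 < f (rAct Λ p γ) with hGood_def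
  have hGoody0 : Good y0 := by
    intro T
    obtain ⟨T', hTT', hyT'⟩ := hy0 T
    exact ⟨q T', ⟨jj T', by rw [← hyT']; exact hyj T'⟩, fun γ hγ => hqT T' γ (hTT' hγ)⟩
  have hGb : ∀ u (c : ℤ), Good u → Good (rAct Λ u (bb ^ c)) := by
    intro u c hu T
    obtain ⟨p, ⟨k, hp⟩, hT⟩ := hu T
    refine ⟨p, ⟨k - c, ?_⟩, hT⟩
    have he : bb ^ k = bb ^ c * bb ^ (k - c) := by
      rw [← zpow_add, show c + (k - c) = k from by ring]
    rw [hp, he, rAct_mul]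
  have hGt : ∀ u, Good u → Good (rAct Λ u tt) := by
    intro u hu T
    set N : ℕ := n.natAbs with hN_def
    have hN0 : (0 : ℤ) < (N : ℤ) := by
      have : 0 < N := by omega
      exact_mod_cast this
    set Th : Finset (BS m n) :=
      (Finset.range N ×ˢ T).image (fun pr => bb ^ (pr.1 : ℤ) * tt * pr.2) with hTh_def
    obtain ⟨p, ⟨k, hp⟩, hT⟩ := hu Th
    set a : ℤ := (-k) % (N : ℤ) with ha_def
    have ha0 : 0 ≤ a := Int.emod_nonneg _ (by omega)
    have haN : a < (N : ℤ) := Int.emod_lt_of_pos _ hN0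
    have h1 : (k + a) % (N : ℤ) = 0 := by
      rw [ha_def, Int.add_emod, Int.emod_emod_of_dvd (-k) dvd_rfl, ← Int.add_emod]
      simp
    have hdvdN : (N : ℤ) ∣ (k + a) := Int.dvd_of_emod_eq_zero h1
    have hdvd : n ∣ (k + a) := Int.natAbs_dvd.mp (by rw [← hN_def]; exact hdvdN)
    obtain ⟨kk, hkk⟩ := hdvd
    refine ⟨rAct Λ (rAct Λ u tt) (bb ^ (m * kk)), ⟨m * kk, rfl⟩, ?_⟩
    intro γ hγ
    have hgrp : tt * bb ^ (m * kk) * γ = bb ^ k * (bb ^ a * tt * γ) := by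
      rw [← BS.bn_t m n kk, ← hkk, zpow_add]
      simp only [mul_assoc]
      rfl
    have key : rAct Λ (rAct Λ (rAct Λ u tt) (bb ^ (m * kk))) γ
        = rAct Λ p (bb ^ a * tt * γ) := by
      rw [hp]
      simp only [← rAct_mul]
      rw [hgrp]
    rw [key]
    apply hT
    have haN' : a.toNat < N := by omega
    have hba : bb ^ a = bb ^ ((a.toNat : ℤ)) := by rw [Int.toNat_of_nonneg ha0]
    rw [hba]
    exact Finset.mem_image.mpr ⟨(a.toNat, γ),
      Finset.mem_product.mpr ⟨Finset.mem_range.mpr haN', hγ⟩, rfl⟩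
  have hGt' : ∀ u, Good u → Good (rAct Λ u tt⁻¹) := by
    intro u hu T
    set M : ℕ := m.natAbs with hM_def
    have hM0 : (0 : ℤ) < (M : ℤ) := by
      have : 0 < M := by omega
      exact_mod_cast this
    set Th : Finset (BS m n) :=
      (Finset.range M ×ˢ T).image (fun pr => bb ^ (pr.1 : ℤ) * tt⁻¹ * pr.2) with hTh_def
    obtain ⟨p, ⟨k, hp⟩, hT⟩ := hu Th
    set a : ℤ := (-k) % (M : ℤ) with ha_def
    have ha0 : 0 ≤ a := Int.emod_nonneg _ (by omega)
    have haM : a < (M : ℤ) := Int.emod_lt_of_pos _ hM0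
    have h1 : (k + a) % (M : ℤ) = 0 := by
      rw [ha_def, Int.add_emod, Int.emod_emod_of_dvd (-k) dvd_rfl, ← Int.add_emod]
      simp
    have hdvdM : (M : ℤ) ∣ (k + a) := Int.dvd_of_emod_eq_zero h1
    have hdvd : m ∣ (k + a) := Int.natAbs_dvd.mp (by rw [← hM_def]; exact hdvdM)
    obtain ⟨kk, hkk⟩ := hdvd
    refine ⟨rAct Λ (rAct Λ u tt⁻¹) (bb ^ (n * kk)), ⟨n * kk, rfl⟩, ?_⟩
    intro γ hγ
    have hgrp : tt⁻¹ * bb ^ (n * kk) * γ = bb ^ k * (bb ^ a * tt⁻¹ * γ) := by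
      rw [← BS.bm_tinv m n kk, ← hkk, zpow_add]
      simp only [mul_assoc]
      rfl
    have key : rAct Λ (rAct Λ (rAct Λ u tt⁻¹) (bb ^ (n * kk))) γ
        = rAct Λ p (bb ^ a * tt⁻¹ * γ) := by
      rw [hp]
      simp only [← rAct_mul]
      rw [hgrp]
    rw [key]
    apply hT
    have haM' : a.toNat < M := by omega
    have hba : bb ^ a = bb ^ ((a.toNat : ℤ)) := by rw [Int.toNat_of_nonneg ha0]
    rw [hba]
    exact Finset.mem_image.mpr ⟨(a.toNat, γ),
      Finset.mem_product.mpr ⟨Finset.mem_range.mpr haM', hγ⟩, rfl⟩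
  have hGletters : ∀ l : List (BS m n),
      (∀ g ∈ l, g = bb ∨ g = bb⁻¹ ∨ g = tt ∨ g = tt⁻¹) →
      ∀ u, Good u → Good (rAct Λ u l.prod) := by
    intro l
    induction l with
    | nil =>
      intro _ u hu
      rw [List.prod_nil, rAct_one]
      exact hu
    | cons g l ih =>
      intro hl u hu
      rw [List.prod_cons, rAct_mul]
      apply ih (fun g' hg' => hl g' (List.mem_cons_of_mem _ hg'))
      rcases hl g (List.mem_cons_self) with h | h | h | h
      · rw [h, show bb = bb ^ (1 : ℤ) from (zpow_one _).symm]
        exact hGb u 1 hu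
      · rw [h, show bb⁻¹ = bb ^ (-1 : ℤ) from (zpow_neg_one _).symm]
        exact hGb u (-1) hu
      · rw [h]; exact hGt u hu
      · rw [h]; exact hGt' u hu
  have hGall : ∀ v : rQuot Λ, Good v := by
    intro v
    obtain ⟨γ, hγ⟩ := rAct_surj Λ y0 v
    obtain ⟨l, hl, hlp⟩ := BS.exists_letter_list m n γ
    have := hGletters l (by rw [hbb_def, htt_def]; exact hl) y0 hGoody0
    rw [hlp, hγ] at this
    exact this
  have hAall : ∀ v : rQuot Λ, v ∈ A := by
    intro v
    obtain ⟨p, ⟨k, hp⟩, hT⟩ := hGall v {1}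
    have h1 : 0 < f p := by
      have := hT 1 (Finset.mem_singleton_self 1)
      rwa [rAct_one] at this
    have hpA := hmemA p h1
    rw [hA] at hpA
    simp only [Set.mem_iUnion, Set.mem_setOf_eq] at hpA
    obtain ⟨y, hy, i, hi⟩ := hpA
    rw [hA]
    simp only [Set.mem_iUnion, Set.mem_setOf_eq]
    refine ⟨y, hy, i - k, ?_⟩
    have hv : v = rAct Λ p (bb ^ (-k)) := by
      rw [hp, ← rAct_mul, ← zpow_add, show k + -k = 0 from by ring, zpow_zero, rAct_one]
    rw [hv, hi, ← rAct_mul, ← zpow_add, show i + -k = i - k from by ring]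
  exact hAne (Set.eq_univ_of_forall hAall)
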